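/- Let K, N ≥ 1 be integers and let A be an m×n real matrix satisfying the restricted isometry property of order NK+1 with constant δ < 1/√(K/N + 1). Let x ∈ ℝⁿ be a vector whose support T satisfies |T| ≤ K. Then for every index set Λ ⊆ {1,…,n} (possibly empty) with T \ Λ ≠ ∅ and |T ∪ Λ| + N ≤ NK + 1, and every set W ⊆ {1,…,n} with |W| = N and W ∩ (T ∪ Λ) = ∅, the residual r = Ax − P_Λ(Ax) satisfies max_{i∈T\Λ} |⟨Aeᵢ, r⟩| > min_{i∈W} |⟨Aeᵢ, r⟩|. (This is the per-iteration guarantee, valid at every iteration including the first, implying that the generalized orthogonal matching pursuit algorithm exactly recovers every K-sparse signal x from y = Ax.) -/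

import Mathlib

/-!
Write the residual as `r = A u`, where `u` agrees with `x` off `Λ` (so is supported on `T ∪ Λ`)
and `r` is orthogonal to the columns indexed by `Λ`. Then
`‖r‖² = ∑_{j ∈ T∖Λ} uⱼ ⟪Aeⱼ, r⟫ ≤ α √K ‖u‖`, with `α` the maximum over `T ∖ Λ`.
Let `w` be the `±1` sign pattern of `⟪Aeᵢ, r⟫` on `W` and `t = √K ‖u‖ / N`.
The RIP gives `|⟪Ay, Az⟫ - ⟪y, z⟫| ≤ δ ‖y‖ ‖z‖` for `y`, `z` supported on `T ∪ Λ ∪ W`;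
applied to `u` and `u - t w`, where `u ⊥ w` and `‖u - t w‖ = √(K/N + 1) ‖u‖`, it yields
`(1 - δ √(K/N + 1)) ‖u‖² ≤ ‖r‖² - t ∑_{i ∈ W} |⟪Aeᵢ, r⟫| ≤ √K ‖u‖ (α - β)`,
with `β` the minimum over `W`. The left side is positive, so `β < α`.
-/

open scoped InnerProductSpace BigOperators

/-- Regard a plain vector in `Fin m → ℝ` as an element of Euclidean space
(so that `‖·‖` is the Euclidean norm and `⟪·,·⟫_ℝ` the Euclidean inner product). -/
noncomputable def toE {m : ℕ} (v : Fin m → ℝ) : EuclideanSpace ℝ (Fin m) := WithLp.toLp 2 v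

/-- The `j`-th column of the matrix `A`, viewed as a vector in Euclidean space. -/
noncomputable def col {m n : ℕ} (A : Matrix (Fin m) (Fin n) ℝ) (j : Fin n) :
    EuclideanSpace ℝ (Fin m) := WithLp.toLp 2 (fun i => A i j)

/-- The number of nonzero entries of a vector. -/
noncomputable def sparsity {n : ℕ} (z : Fin n → ℝ) : ℕ :=
  (Finset.univ.filter (fun i => z i ≠ 0)).card

/-- `A` satisfies the restricted isometry property of order `s` with constant `δ`:
`(1−δ)‖z‖₂² ≤ ‖Az‖₂² ≤ (1+δ)‖z‖₂²` for every vector `z` with at most `s` nonzero entries. -/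
def RIP {m n : ℕ} (A : Matrix (Fin m) (Fin n) ℝ) (s : ℕ) (δ : ℝ) : Prop :=
  ∀ z : Fin n → ℝ, sparsity z ≤ s →
    (1 - δ) * ‖toE z‖ ^ 2 ≤ ‖toE (A.mulVec z)‖ ^ 2 ∧
    ‖toE (A.mulVec z)‖ ^ 2 ≤ (1 + δ) * ‖toE z‖ ^ 2

/-- Orthogonal projection of `ℝᵐ` onto the span of the columns of `A` indexed by `Λ`. -/
noncomputable def projSpan {m n : ℕ} (A : Matrix (Fin m) (Fin n) ℝ) (Λ : Finset (Fin n))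
    (v : EuclideanSpace ℝ (Fin m)) : EuclideanSpace ℝ (Fin m) :=
  Submodule.orthogonalProjectionOnto (Submodule.span ℝ ((fun j => col A j) '' (Λ : Set (Fin n)))) v

section InnerProductSpace

variable {E F : Type*} [NormedAddCommGroup E] [InnerProductSpace ℝ E]
  [NormedAddCommGroup F] [InnerProductSpace ℝ F]

theorem norm_smul_add_smul_sq (a b : ℝ) (x y : E) :
    ‖a • x + b • y‖ ^ 2 = a ^ 2 * ‖x‖ ^ 2 + 2 * (a * b) * ⟪x, y⟫_ℝ + b ^ 2 * ‖y‖ ^ 2 := by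
  rw [norm_add_sq_real, norm_smul, norm_smul, real_inner_smul_left, real_inner_smul_right,
    mul_pow, mul_pow, Real.norm_eq_abs, Real.norm_eq_abs, sq_abs, sq_abs]
  ring

theorem abs_inner_map_sub_inner_le (Φ : E →ₗ[ℝ] F) {δ : ℝ} {x y : E}
    (hΦ : ∀ a b : ℝ, |‖Φ (a • x + b • y)‖ ^ 2 - ‖a • x + b • y‖ ^ 2| ≤ δ * ‖a • x + b • y‖ ^ 2) :
    |⟪Φ x, Φ y⟫_ℝ - ⟪x, y⟫_ℝ| ≤ δ * ‖x‖ * ‖y‖ := by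
  have polar : ∀ a b : ℝ,
      4 * (a * b) * (⟪Φ x, Φ y⟫_ℝ - ⟪x, y⟫_ℝ) ≤ 2 * δ * (a ^ 2 * ‖x‖ ^ 2 + b ^ 2 * ‖y‖ ^ 2) := by
    intro a b
    have h₁ := (abs_le.1 (hΦ a b)).2
    have h₂ := (abs_le.1 (hΦ a (-b))).1
    simp only [map_add, map_smul, norm_smul_add_smul_sq] at h₁ h₂
    linarith
  rcases (mul_nonneg (norm_nonneg x) (norm_nonneg y)).eq_or_lt with h0 | hpos
  · rcases mul_eq_zero.1 h0.symm with hx | hy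
    · simp [norm_eq_zero.1 hx]
    · simp [norm_eq_zero.1 hy]
  · rw [abs_le]
    constructor <;> nlinarith [polar ‖y‖ ‖x‖, polar ‖y‖ (-‖x‖)]

end InnerProductSpace

@[simp] lemma toE_sub {m : ℕ} (u v : Fin m → ℝ) : toE (u - v) = toE u - toE v := rfl
@[simp] lemma toE_smul {m : ℕ} (a : ℝ) (u : Fin m → ℝ) : toE (a • u) = a • toE u := rfl

lemma norm_toE_sq {m : ℕ} (z : Fin m → ℝ) : ‖toE z‖ ^ 2 = ∑ i, z i ^ 2 := by
  simp [toE, EuclideanSpace.norm_sq_eq]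

lemma inner_toE {m : ℕ} (u v : Fin m → ℝ) : ⟪toE u, toE v⟫_ℝ = ∑ i, u i * v i := by
  simp [toE, PiLp.inner_apply, mul_comm]

lemma toE_mulVec {m n : ℕ} (A : Matrix (Fin m) (Fin n) ℝ) (v : Fin n → ℝ) :
    toE (A.mulVec v) = ∑ j, v j • col A j := by
  ext i
  simp [toE, col, Matrix.mulVec, dotProduct, mul_comm]

lemma sparsity_le_card {n : ℕ} {z : Fin n → ℝ} {S : Finset (Fin n)} (hz : ∀ i ∉ S, z i = 0) :
    sparsity z ≤ S.card :=
  Finset.card_le_card fun i hi => by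
    by_contra h
    exact (Finset.mem_filter.1 hi).2 (hz i h)

lemma inner_toE_mulVec {m n : ℕ} (A : Matrix (Fin m) (Fin n) ℝ) (r : EuclideanSpace ℝ (Fin m))
    (u : Fin n → ℝ) : ⟪r, toE (A.mulVec u)⟫_ℝ = ∑ j, u j * ⟪col A j, r⟫_ℝ := by
  simp [toE_mulVec, inner_sum, real_inner_smul_right, real_inner_comm]

lemma inner_col_sub_projSpan_eq_zero {m n : ℕ} (A : Matrix (Fin m) (Fin n) ℝ)
    {Λ : Finset (Fin n)} {i : Fin n} (hi : i ∈ Λ) (v : EuclideanSpace ℝ (Fin m)) :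
    ⟪col A i, v - projSpan A Λ v⟫_ℝ = 0 :=
  Submodule.sub_starProjection_mem_orthogonal v _ (Submodule.subset_span ⟨i, hi, rfl⟩)

lemma exists_mulVec_eq_sub_projSpan {m n : ℕ} (A : Matrix (Fin m) (Fin n) ℝ)
    (Λ : Finset (Fin n)) (x : Fin n → ℝ) :
    ∃ u : Fin n → ℝ, toE (A.mulVec u) = toE (A.mulVec x) - projSpan A Λ (toE (A.mulVec x)) ∧
      ∀ j ∉ Λ, u j = x j := by
  obtain ⟨c, hc⟩ := (Submodule.mem_span_image_finset_iff_exists_fun' ℝ).1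
    (Submodule.coe_mem (Submodule.orthogonalProjectionOnto
      (Submodule.span ℝ ((fun j => col A j) '' (Λ : Set (Fin n)))) (toE (A.mulVec x))))
  refine ⟨x - fun j => if j ∈ Λ then c j else 0, ?_, fun j hj => by simp [hj]⟩
  rw [Matrix.mulVec_sub, toE_sub, toE_mulVec A (fun j => if j ∈ Λ then c j else 0)]
  simp only [ite_smul, zero_smul, Finset.sum_ite_mem, Finset.univ_inter, hc]
  rfl

section signIndicator

variable {ι : Type*} [DecidableEq ι]

/-- Unlike `SignType.sign`, this is `1` (not `0`) where `g` vanishes, so that every entry on `W`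
is `±1`. -/
noncomputable def signIndicator (W : Finset ι) (g : ι → ℝ) (i : ι) : ℝ :=
  if i ∈ W then (if 0 ≤ g i then 1 else -1) else 0

lemma signIndicator_of_not_mem {W : Finset ι} {i : ι} (hi : i ∉ W) (g : ι → ℝ) :
    signIndicator W g i = 0 := if_neg hi

lemma sum_signIndicator_mul [Fintype ι] (W : Finset ι) (g : ι → ℝ) :
    ∑ i, signIndicator W g i * g i = ∑ i ∈ W, |g i| := by
  rw [← Finset.sum_subset W.subset_univ fun i _ hi => by simp [signIndicator_of_not_mem hi]]
  refine Finset.sum_congr rfl fun i hi => ?_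
  rcases le_or_gt 0 (g i) with h | h
  · simp [signIndicator, hi, h, abs_of_nonneg h]
  · simp [signIndicator, hi, h.not_ge, abs_of_neg h]

lemma sum_signIndicator_sq [Fintype ι] (W : Finset ι) (g : ι → ℝ) :
    ∑ i, signIndicator W g i ^ 2 = W.card := by
  rw [← Finset.sum_subset W.subset_univ fun i _ hi => by simp [signIndicator_of_not_mem hi]]
  rw [Finset.card_eq_sum_ones, Nat.cast_sum]
  refine Finset.sum_congr rfl fun i hi => ?_
  by_cases h : 0 ≤ g i <;> simp [signIndicator, hi, h]

end signIndicator

lemma sum_abs_le_sqrt_card_mul_norm {n : ℕ} (D : Finset (Fin n)) (u : Fin n → ℝ) :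
    ∑ j ∈ D, |u j| ≤ √D.card * ‖toE u‖ := by
  have hsq : (∑ j ∈ D, |u j|) ^ 2 ≤ D.card * ‖toE u‖ ^ 2 := calc
    (∑ j ∈ D, |u j|) ^ 2 ≤ D.card * ∑ j ∈ D, |u j| ^ 2 := sq_sum_le_card_mul_sum_sq
    _ ≤ D.card * ‖toE u‖ ^ 2 := by
      rw [norm_toE_sq]
      gcongr
      simp only [sq_abs]
      exact Finset.sum_le_sum_of_subset_of_nonneg D.subset_univ fun _ _ _ => sq_nonneg _
  rw [← Real.sqrt_sq (norm_nonneg (toE u)), ← Real.sqrt_mul (Nat.cast_nonneg _)]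
  exact Real.le_sqrt_of_sq_le hsq

lemma sum_mul_le_sup'_mul_sqrt_card_mul_norm {n : ℕ} {D : Finset (Fin n)} (hD : D.Nonempty)
    {u g : Fin n → ℝ} (h : ∀ j ∉ D, u j * g j = 0) :
    ∑ j, u j * g j ≤ D.sup' hD (fun j => |g j|) * √D.card * ‖toE u‖ := calc
  ∑ j, u j * g j = ∑ j ∈ D, u j * g j :=
    (Finset.sum_subset D.subset_univ fun j _ hj => h j hj).symm
  _ ≤ ∑ j ∈ D, |u j| * D.sup' hD (fun j => |g j|) := by
    refine Finset.sum_le_sum fun j hj => (le_abs_self _).trans ?_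
    rw [abs_mul]
    exact mul_le_mul_of_nonneg_left (Finset.le_sup' (fun j => |g j|) hj) (abs_nonneg _)
  _ ≤ D.sup' hD (fun j => |g j|) * √D.card * ‖toE u‖ := by
    rw [← Finset.sum_mul, mul_assoc, mul_comm]
    gcongr
    · exact (abs_nonneg _).trans (Finset.le_sup' (fun j => |g j|) hD.choose_spec)
    · exact sum_abs_le_sqrt_card_mul_norm D u

lemma RIP.abs_inner_mulVec_sub_inner_le {m n : ℕ} {A : Matrix (Fin m) (Fin n) ℝ} {s : ℕ} {δ : ℝ}
    (hA : RIP A s δ) {S : Finset (Fin n)} (hS : S.card ≤ s) {x y : Fin n → ℝ}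
    (hx : ∀ i ∉ S, x i = 0) (hy : ∀ i ∉ S, y i = 0) :
    |⟪toE (A.mulVec x), toE (A.mulVec y)⟫_ℝ - ⟪toE x, toE y⟫_ℝ| ≤ δ * ‖toE x‖ * ‖toE y‖ := by
  refine abs_inner_map_sub_inner_le (Matrix.toEuclideanLin A) fun a b => ?_
  obtain ⟨hlo, hhi⟩ := hA (a • x + b • y)
    ((sparsity_le_card fun i hi => by simp [hx i hi, hy i hi]).trans hS)
  change |‖toE (A.mulVec (a • x + b • y))‖ ^ 2 - ‖toE (a • x + b • y)‖ ^ 2|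
    ≤ δ * ‖toE (a • x + b • y)‖ ^ 2
  rw [abs_le]
  constructor <;> linarith

/-- The RIP inner-product bound applied to `u` and `u - t • w`, where `w` is the sign pattern on
`W` of the correlations of the columns with `A u`. -/
lemma RIP.norm_sq_sub_le_norm_mulVec_sq_sub {m n : ℕ} {A : Matrix (Fin m) (Fin n) ℝ} {s : ℕ}
    {δ : ℝ} (hA : RIP A s δ) {S W : Finset (Fin n)} (hSW : Disjoint W S)
    (hcard : S.card + W.card ≤ s) {u : Fin n → ℝ} (hu : ∀ j ∉ S, u j = 0) (t : ℝ) :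
    ‖toE u‖ ^ 2 - δ * ‖toE u‖ * √(‖toE u‖ ^ 2 + t ^ 2 * W.card)
      ≤ ‖toE (A.mulVec u)‖ ^ 2 - t * ∑ i ∈ W, |⟪col A i, toE (A.mulVec u)⟫_ℝ| := by
  set r := toE (A.mulVec u)
  set w := signIndicator W fun i => ⟪col A i, r⟫_ℝ
  have hu' : ∀ i ∉ S ∪ W, u i = 0 := fun i hi => hu i (Finset.notMem_union.1 hi).1
  have hw' : ∀ i ∉ S ∪ W, w i = 0 := fun i hi =>
    signIndicator_of_not_mem (Finset.notMem_union.1 hi).2 _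
  have huw : ⟪toE u, toE w⟫_ℝ = 0 := by
    rw [inner_toE]
    refine Finset.sum_eq_zero fun i _ => ?_
    by_cases hi : i ∈ W
    · simp [hu i (Finset.disjoint_left.1 hSW hi)]
    · simp [w, signIndicator_of_not_mem hi]
  have hinner : ⟪toE u, toE (u - t • w)⟫_ℝ = ‖toE u‖ ^ 2 := by
    simp [inner_sub_right, real_inner_smul_right, huw]
  have hnorm : ‖toE (u - t • w)‖ = √(‖toE u‖ ^ 2 + t ^ 2 * W.card) := by
    have hw : ‖toE w‖ ^ 2 = W.card := by rw [norm_toE_sq, sum_signIndicator_sq]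
    rw [← hw, eq_comm, Real.sqrt_eq_iff_eq_sq (by positivity) (norm_nonneg _), toE_sub, toE_smul,
      norm_sub_sq_real, real_inner_smul_right, huw, norm_smul, mul_pow, Real.norm_eq_abs, sq_abs]
    ring
  have hAw : ⟪r, toE (A.mulVec (u - t • w))⟫_ℝ = ‖r‖ ^ 2 - t * ∑ i ∈ W, |⟪col A i, r⟫_ℝ| := by
    rw [Matrix.mulVec_sub, Matrix.mulVec_smul, toE_sub, toE_smul, inner_sub_right,
      real_inner_smul_right, real_inner_self_eq_norm_sq, inner_toE_mulVec, sum_signIndicator_mul]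
  have key := (abs_le.1 (hA.abs_inner_mulVec_sub_inner_le ((Finset.card_union_le _ _).trans hcard)
    hu' (y := u - t • w) fun i hi => by simp [hu' i hi, hw' i hi])).1
  rw [hinner, hnorm, hAw] at key
  linarith

lemma RIP.inf'_abs_inner_col_lt {m n : ℕ} {A : Matrix (Fin m) (Fin n) ℝ} {s : ℕ} {δ : ℝ}
    (hA : RIP A s δ) {S W : Finset (Fin n)} (hW : W.Nonempty) (hSW : Disjoint W S)
    (hcard : S.card + W.card ≤ s) {u : Fin n → ℝ} (hu : ∀ j ∉ S, u j = 0) (hu0 : toE u ≠ 0)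
    {K α : ℝ} (hK : 0 ≤ K) (hδ : δ * √(K / W.card + 1) < 1)
    (hα : ‖toE (A.mulVec u)‖ ^ 2 ≤ α * √K * ‖toE u‖) :
    W.inf' hW (fun i => |⟪col A i, toE (A.mulVec u)⟫_ℝ|) < α := by
  set β := W.inf' hW fun i => |⟪col A i, toE (A.mulVec u)⟫_ℝ|
  set N : ℝ := (W.card : ℝ)
  set c := √(K / N + 1)
  have hN : 0 < N := Nat.cast_pos.2 hW.card_pos
  -- `t N = √K ‖u‖` cancels `α √K ‖u‖` against `t N β`, and makes `‖u - t • w‖ = c ‖u‖`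
  set t := √K * ‖toE u‖ / N
  have htN : t * N = √K * ‖toE u‖ := div_mul_cancel₀ _ hN.ne'
  have hsqrt : √(‖toE u‖ ^ 2 + t ^ 2 * N) = c * ‖toE u‖ := by
    rw [Real.sqrt_eq_iff_eq_sq (by positivity) (by positivity), mul_pow,
      Real.sq_sqrt (by positivity), div_pow, mul_pow, Real.sq_sqrt hK]
    field_simp
    ring
  have hβ : N * β ≤ ∑ i ∈ W, |⟪col A i, toE (A.mulVec u)⟫_ℝ| := by
    simpa [nsmul_eq_mul] using Finset.card_nsmul_le_sum W _ β fun i hi => Finset.inf'_le _ hi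
  have hmain : (1 - δ * c) * ‖toE u‖ ^ 2 ≤ √K * ‖toE u‖ * (α - β) := by
    have key := hA.norm_sq_sub_le_norm_mulVec_sq_sub hSW hcard hu t
    rw [hsqrt] at key
    have htq := mul_le_mul_of_nonneg_left hβ (by positivity : 0 ≤ t)
    rw [← mul_assoc, htN] at htq
    linarith
  have hpos : 0 < (1 - δ * c) * ‖toE u‖ ^ 2 :=
    mul_pos (by linarith) (pow_pos (norm_pos_iff.2 hu0) 2)
  linarith [pos_of_mul_pos_right (hpos.trans_le hmain) (by positivity)]

theorem stmt7_general {m n : ℕ} (K N : ℕ)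
    (A : Matrix (Fin m) (Fin n) ℝ) (δ : ℝ)
    (hδ : δ < 1 / Real.sqrt ((K : ℝ) / N + 1))
    (hRIP : RIP A (N * K + 1) δ)
    (x : Fin n → ℝ) (T : Finset (Fin n)) (hT : ∀ i, i ∈ T ↔ x i ≠ 0) (hTK : T.card ≤ K)
    (Λ : Finset (Fin n)) (hTΛ : (T \ Λ).Nonempty)
    (hcard : (T ∪ Λ).card + N ≤ N * K + 1)
    (W : Finset (Fin n)) (hWcard : W.card = N) (hWne : W.Nonempty)
    (hWdis : Disjoint W (T ∪ Λ)) :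
    W.inf' hWne (fun i =>
        |⟪col A i, toE (A.mulVec x) - projSpan A Λ (toE (A.mulVec x))⟫_ℝ|)
      < (T \ Λ).sup' hTΛ (fun i =>
        |⟪col A i, toE (A.mulVec x) - projSpan A Λ (toE (A.mulVec x))⟫_ℝ|) := by
  obtain ⟨u, hur, hux⟩ := exists_mulVec_eq_sub_projSpan A Λ x
  have hu : ∀ j ∉ T ∪ Λ, u j = 0 := fun j hj => by
    rw [Finset.notMem_union, hT, not_not] at hj
    rw [hux j hj.2, hj.1]
  have hu0 : toE u ≠ 0 := fun h => by
    obtain ⟨j, hj⟩ := hTΛ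
    obtain ⟨hjT, hjΛ⟩ := Finset.mem_sdiff.1 hj
    exact (hT j).1 hjT (hux j hjΛ ▸ congrFun (congrArg WithLp.ofLp h) j)
  have hsupp : ∀ j ∉ T \ Λ, u j * ⟪col A j, toE (A.mulVec u)⟫_ℝ = 0 := fun j hj => by
    by_cases hjΛ : j ∈ Λ
    · rw [hur, inner_col_sub_projSpan_eq_zero A hjΛ, mul_zero]
    · rw [hu j (Finset.notMem_union.2 ⟨fun hjT => hj (Finset.mem_sdiff.2 ⟨hjT, hjΛ⟩), hjΛ⟩),
        zero_mul]
  rw [← hur]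
  refine hRIP.inf'_abs_inner_col_lt hWne hWdis (hWcard ▸ hcard) hu hu0 (Nat.cast_nonneg K)
    (hWcard ▸ (lt_div_iff₀ (by positivity)).1 hδ) ?_
  calc ‖toE (A.mulVec u)‖ ^ 2 = ∑ j, u j * ⟪col A j, toE (A.mulVec u)⟫_ℝ := by
        rw [← real_inner_self_eq_norm_sq, inner_toE_mulVec]
    _ ≤ _ * √(T \ Λ).card * ‖toE u‖ := sum_mul_le_sup'_mul_sqrt_card_mul_norm hTΛ hsupp
    _ ≤ _ * √K * ‖toE u‖ := by
        gcongr
        · exact (abs_nonneg _).trans (Finset.le_sup' (fun j => |_|) hTΛ.choose_spec)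
        · exact (Finset.card_le_card Finset.sdiff_subset).trans hTK

/-- Theorem 3 of Chen–Ge (per-iteration guarantee for gOMP, valid at every iteration
including the first, where `Λ` may be empty): if `A` satisfies the RIP
of order `NK+1` with constant `δ < 1/√(K/N + 1)`, `x` has support `T` with `|T| ≤ K`,
`T \ Λ ≠ ∅`, `|T ∪ Λ| + N ≤ NK + 1`, and `W` has size `N` and is disjoint from `T ∪ Λ`,
then for the residual `r = Ax − P_Λ(Ax)`,
`max_{i∈T\Λ} |⟨Aeᵢ, r⟩| > min_{i∈W} |⟨Aeᵢ, r⟩|`. -/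
theorem stmt7 {m n : ℕ} (K N : ℕ) (hK : 1 ≤ K) (hN : 1 ≤ N)
    (A : Matrix (Fin m) (Fin n) ℝ) (δ : ℝ)
    (hδ : δ < 1 / Real.sqrt ((K : ℝ) / N + 1))
    (hRIP : RIP A (N * K + 1) δ)
    (x : Fin n → ℝ) (T : Finset (Fin n)) (hT : ∀ i, i ∈ T ↔ x i ≠ 0) (hTK : T.card ≤ K)
    (Λ : Finset (Fin n)) (hTΛ : (T \ Λ).Nonempty)
    (hcard : (T ∪ Λ).card + N ≤ N * K + 1)
    (W : Finset (Fin n)) (hWcard : W.card = N) (hWne : W.Nonempty)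
    (hWdis : Disjoint W (T ∪ Λ)) :
    W.inf' hWne (fun i =>
        |⟪col A i, toE (A.mulVec x) - projSpan A Λ (toE (A.mulVec x))⟫_ℝ|)
      < (T \ Λ).sup' hTΛ (fun i =>
        |⟪col A i, toE (A.mulVec x) - projSpan A Λ (toE (A.mulVec x))⟫_ℝ|) :=
  stmt7_general K N A δ hδ hRIP x T hT hTK Λ hTΛ hcard W hWcard hWne hWdis
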